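/- Let V(x) = |x|² on ℝ^d and let k̃_t(x,y) = (2πt)^{-d/2} exp(-|x-y|²/(2t)) exp(-α(t)(|x|²+|y|²)) with α(t) = (√(1+t²)−1)/(2t) be its heat-type kernel. Then there exist constants c, C > 0 such that for all x ∈ ℝ^d, t > 0, and locally integrable f ≥ 0, the exponential average satisfies (1/(Φ_{2,c}(x,t)|B(x,t)|)) ∫_{B(x,t)} f(y) dy ≤ C sup_{s>0} ∫_{ℝ^d} k̃_s(x,y) f(y) dy, where Φ_{2,c}(x,t) := exp(c(1 + t(1+|x|))²). -/
import Mathlib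


open MeasureTheory Metric
open scoped ENNReal

noncomputable section

/-- The Mehler coefficient `α(t) = (√(1+t²) − 1)/(2t)`. -/
def mehlerAlpha (t : ℝ) : ℝ := (Real.sqrt (1 + t ^ 2) - 1) / (2 * t)

/-- The Mehler heat-type kernel of the harmonic oscillator `-Δ + |x|²`:
`k̃_t(x,y) = (2πt)^{-d/2} exp(-|x-y|²/(2t)) exp(-α(t)(|x|²+|y|²))`. -/
def mehlerKer (d : ℕ) (t : ℝ) (x y : EuclideanSpace ℝ (Fin d)) : ℝ :=
  (2 * Real.pi * t) ^ (-(d : ℝ) / 2) * Real.exp (-(dist x y) ^ 2 / (2 * t)) *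
    Real.exp (-(mehlerAlpha t) * (‖x‖ ^ 2 + ‖y‖ ^ 2))

set_option maxHeartbeats 1000000 in
theorem stmt18 {d : ℕ} (hd : 1 ≤ d) :
    ∃ c C : ℝ, 0 < c ∧ 0 < C ∧
      ∀ (x : EuclideanSpace ℝ (Fin d)) (t : ℝ), 0 < t →
        ∀ f : EuclideanSpace ℝ (Fin d) → ℝ≥0∞, Measurable f →
          (∫⁻ y in ball x t, f y) /
              (ENNReal.ofReal (Real.exp (c * (1 + t * (1 + ‖x‖)) ^ 2)) * volume (ball x t)) ≤
            ENNReal.ofReal C *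
              ⨆ (s : ℝ) (_ : 0 < s), ∫⁻ y, ENNReal.ofReal (mehlerKer d s x y) * f y := by
  classical
  haveI : Nonempty (Fin d) := ⟨⟨0, hd⟩⟩
  haveI : Nontrivial (EuclideanSpace ℝ (Fin d)) := inferInstance
  set ω : ℝ≥0∞ := volume (ball (0 : EuclideanSpace ℝ (Fin d)) 1) with hωdef
  have hω0 : ω ≠ 0 := (measure_ball_pos volume _ one_pos).ne'
  have hωtop : ω ≠ ∞ := measure_ball_lt_top.ne
  set ωr : ℝ := ω.toReal with hωrdef
  have hωrpos : 0 < ωr := ENNReal.toReal_pos hω0 hωtop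
  set C : ℝ := Real.exp (1/2) * (2 * Real.pi) ^ ((d : ℝ)/2) / ωr with hCdef
  have hCpos : 0 < C := by positivity
  refine ⟨1, C, one_pos, hCpos, ?_⟩
  intro x t ht f hf
  set Ex : ℝ := (1 + t * (1 + ‖x‖)) ^ 2 with hExdef
  have hEx0 : 0 ≤ Ex := sq_nonneg _
  set κ : ℝ := (2 * Real.pi) ^ (-(d : ℝ)/2) / t ^ d * Real.exp (-(1:ℝ)/2) * Real.exp (-Ex)
    with hκdef
  have hκpos : 0 < κ := by positivity
  -- rewrite the prefactor
  have hA : (2 * Real.pi * t ^ 2 : ℝ) ^ (-(d : ℝ)/2)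
      = (2 * Real.pi) ^ (-(d : ℝ)/2) / t ^ d := by
    rw [Real.mul_rpow (by positivity) (by positivity)]
    rw [div_eq_mul_inv]
    congr 1
    rw [← Real.rpow_natCast t d, ← Real.rpow_neg ht.le, ← Real.rpow_natCast t 2,
      ← Real.rpow_mul ht.le]
    congr 1
    push_cast
    ring
  -- pointwise kernel bound on the ball
  have hpt : ∀ y ∈ ball x t, κ ≤ mehlerKer d (t ^ 2) x y := by
    intro y hy
    have hdy : dist x y < t := by rw [dist_comm]; exact mem_ball.mp hy
    have hny : ‖y‖ ≤ ‖x‖ + t := by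
      have h1 : ‖y‖ - ‖x‖ ≤ ‖y - x‖ := norm_sub_norm_le _ _
      have h2 : ‖y - x‖ = dist x y := by rw [dist_comm, dist_eq_norm]
      linarith
    have hd2 : dist x y ^ 2 ≤ t ^ 2 := by nlinarith [dist_nonneg (x := x) (y := y)]
    have hexp1 : (-(1:ℝ)/2) ≤ -(dist x y) ^ 2 / (2 * t ^ 2) := by
      rw [div_le_div_iff₀ (by norm_num) (by positivity)]
      nlinarith
    -- bound on the Mehler coefficient
    set m : ℝ := min 1 t with hmdef
    have hm0 : 0 ≤ m := le_min zero_le_one ht.le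
    have hsq : Real.sqrt (1 + (t ^ 2) ^ 2) ≤ 1 + t ^ 2 * m ^ 2 := by
      rw [show (1 + t ^ 2 * m ^ 2 : ℝ) = Real.sqrt ((1 + t ^ 2 * m ^ 2) ^ 2) from
        (Real.sqrt_sq (by positivity)).symm]
      apply Real.sqrt_le_sqrt
      rcases le_total t 1 with h | h
      · rw [hmdef, min_eq_right h]; nlinarith
      · rw [hmdef, min_eq_left h]; nlinarith
    have ha0 : 0 ≤ mehlerAlpha (t ^ 2) := by
      have h1 : (1:ℝ) ≤ Real.sqrt (1 + (t ^ 2) ^ 2) := by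
        nlinarith [Real.sq_sqrt (show (0:ℝ) ≤ 1 + (t ^ 2) ^ 2 by positivity),
          Real.sqrt_nonneg (1 + (t ^ 2) ^ 2)]
      unfold mehlerAlpha
      apply div_nonneg (by linarith) (by positivity)
    have ha : mehlerAlpha (t ^ 2) ≤ m ^ 2 / 2 := by
      unfold mehlerAlpha
      rw [div_le_div_iff₀ (by positivity) (by norm_num)]
      nlinarith
    have hsum : ‖x‖ ^ 2 + ‖y‖ ^ 2 ≤ 2 * (‖x‖ + t) ^ 2 := by
      nlinarith [norm_nonneg x, norm_nonneg y]
    have hmt : m * (‖x‖ + t) ≤ 1 + t * (1 + ‖x‖) := by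
      rcases le_total t 1 with h | h
      · rw [hmdef, min_eq_right h]; nlinarith [norm_nonneg x]
      · rw [hmdef, min_eq_left h]; nlinarith [norm_nonneg x]
    have haE : mehlerAlpha (t ^ 2) * (‖x‖ ^ 2 + ‖y‖ ^ 2) ≤ Ex := by
      have h2 : mehlerAlpha (t ^ 2) * (‖x‖ ^ 2 + ‖y‖ ^ 2) ≤ (m ^ 2 / 2) * (2 * (‖x‖ + t) ^ 2) :=
        mul_le_mul ha hsum (by positivity) (by positivity)
      have h3 : (m ^ 2 / 2) * (2 * (‖x‖ + t) ^ 2) = (m * (‖x‖ + t)) ^ 2 := by ring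
      have h4 : 0 ≤ m * (‖x‖ + t) := by positivity
      rw [hExdef]
      nlinarith
    calc κ = (2 * Real.pi * t ^ 2) ^ (-(d : ℝ)/2) * Real.exp (-(1:ℝ)/2) * Real.exp (-Ex) := by
          rw [hκdef, hA]
      _ ≤ mehlerKer d (t ^ 2) x y := by
          unfold mehlerKer
          gcongr
          all_goals first
            | exact Real.rpow_nonneg (by positivity) _
            | exact hexp1
            | linarith
  -- measurability of the kernel
  have hkerMeas : Measurable fun y => ENNReal.ofReal (mehlerKer d (t ^ 2) x y) * f y := by
    apply Measurable.mul _ hf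
    apply Measurable.ennreal_ofReal
    unfold mehlerKer
    fun_prop
  -- integral chain
  have hchain : ENNReal.ofReal κ * ∫⁻ y in ball x t, f y ≤
      ⨆ (s : ℝ) (_ : 0 < s), ∫⁻ y, ENNReal.ofReal (mehlerKer d s x y) * f y := by
    have h1 : ENNReal.ofReal κ * ∫⁻ y in ball x t, f y
        = ∫⁻ y in ball x t, ENNReal.ofReal κ * f y := (lintegral_const_mul _ hf).symm
    have h2 : (∫⁻ y in ball x t, ENNReal.ofReal κ * f y)
        ≤ ∫⁻ y in ball x t, ENNReal.ofReal (mehlerKer d (t ^ 2) x y) * f y := by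
      apply setLIntegral_mono hkerMeas
      intro y hy
      exact mul_le_mul' (ENNReal.ofReal_le_ofReal (hpt y hy)) le_rfl
    have h3 : (∫⁻ y in ball x t, ENNReal.ofReal (mehlerKer d (t ^ 2) x y) * f y)
        ≤ ∫⁻ y, ENNReal.ofReal (mehlerKer d (t ^ 2) x y) * f y :=
      setLIntegral_le_lintegral _ _
    have h4 : ENNReal.ofReal κ * ∫⁻ y in ball x t, f y
        ≤ ∫⁻ y, ENNReal.ofReal (mehlerKer d (t ^ 2) x y) * f y := by
      rw [h1]; exact h2.trans h3
    exact h4.trans (le_iSup₂_of_le (t ^ 2) (by positivity) le_rfl)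
  -- volume of the ball
  have hvol : volume (ball x t) = ENNReal.ofReal (t ^ d * ωr) := by
    rw [Measure.addHaar_ball volume x ht.le, finrank_euclideanSpace_fin, ← hωdef,
      ENNReal.ofReal_mul (by positivity)]
    congr 1
    exact (ENNReal.ofReal_toReal hωtop).symm
  have hvol0 : volume (ball x t) ≠ 0 := (measure_ball_pos volume x ht).ne'
  have hvoltop : volume (ball x t) ≠ ∞ := measure_ball_lt_top.ne
  rw [ENNReal.div_le_iff_le_mul
    (Or.inl (mul_ne_zero (ENNReal.ofReal_pos.mpr (Real.exp_pos _)).ne' hvol0))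
    (Or.inl (ENNReal.mul_ne_top ENNReal.ofReal_ne_top hvoltop))]
  have hone : C * κ * Real.exp Ex * (t ^ d * ωr) = 1 := by
    have h2π : (2 * Real.pi) ^ (-(d : ℝ)/2) = ((2 * Real.pi) ^ ((d : ℝ)/2))⁻¹ := by
      rw [show (-(d : ℝ)/2) = -((d : ℝ)/2) by ring, Real.rpow_neg (by positivity)]
    rw [hCdef, hκdef, h2π, show (-(1:ℝ)/2) = -(1/2) by ring, Real.exp_neg, Real.exp_neg]
    have hP : (0:ℝ) < (2 * Real.pi) ^ ((d : ℝ)/2) := by positivity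
    field_simp
  calc (∫⁻ y in ball x t, f y)
      = ENNReal.ofReal (C * κ * Real.exp Ex * (t ^ d * ωr)) * ∫⁻ y in ball x t, f y := by
        rw [hone, ENNReal.ofReal_one, one_mul]
    _ = ENNReal.ofReal C * (ENNReal.ofReal κ * ∫⁻ y in ball x t, f y) *
          (ENNReal.ofReal (Real.exp Ex) * ENNReal.ofReal (t ^ d * ωr)) := by
        rw [ENNReal.ofReal_mul (by positivity), ENNReal.ofReal_mul (by positivity),
          ENNReal.ofReal_mul (by positivity)]
        ring
    _ ≤ ENNReal.ofReal C *
          (⨆ (s : ℝ) (_ : 0 < s), ∫⁻ y, ENNReal.ofReal (mehlerKer d s x y) * f y) *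
          (ENNReal.ofReal (Real.exp Ex) * volume (ball x t)) := by
        rw [hvol]
        exact mul_le_mul' (mul_le_mul' le_rfl hchain) le_rfl
    _ = ENNReal.ofReal C *
          (⨆ (s : ℝ) (_ : 0 < s), ∫⁻ y, ENNReal.ofReal (mehlerKer d s x y) * f y) *
          (ENNReal.ofReal (Real.exp (1 * Ex)) * volume (ball x t)) := by
        rw [one_mul]
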